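/- arXiv:2604.21157 — 3 statements merged into one kernel-verified Lean document; each statement's English description precedes it below -/
import Mathlib

section
/- Let N be an odd squarefree positive integer, m a divisor of N, and n > 0 an integer with n ≡ 0 or 3 (mod 4), written as −n = D_n·f_n² with D_n a fundamental discriminant. Then H_{m,N}(n) = L(0,χ_{D_n}) · (∏_{p prime, p | f_n, p ∤ N} D_p(n)) · (∏_{p prime, p | m} C_p(n)) · (∏_{p prime, p | N/m} A_p(n)). -/
open scoped BigOperators

/-- The Kronecker symbol `(D/p)` at a prime `p`. -/
def kronP (D : ℤ) (p : ℕ) : ℤ :=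
  if p = 2 then
    if D % 2 = 0 then 0 else if D % 8 = 1 ∨ D % 8 = 7 then 1 else -1
  else jacobiSym D p

/-- The Kronecker symbol `(D/m)` for positive `m`: the completely multiplicative
function of `m` determined by its values at primes. -/
def kron (D : ℤ) (m : ℕ) : ℤ :=
  m.factorization.prod fun p k => kronP D p ^ k

/-- Fundamental discriminant: `1`, or squarefree `≡ 1 (mod 4)`, or `4k` with
`k ≡ 2, 3 (mod 4)` squarefree. -/
def IsFundDisc (D : ℤ) : Prop :=
  D = 1 ∨ (D % 4 = 1 ∧ Squarefree D) ∨
    ∃ k : ℤ, D = 4 * k ∧ (k % 4 = 2 ∨ k % 4 = 3) ∧ Squarefree k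

/-- The decomposition `a = D·f²` with `D` a fundamental discriminant, `f ≥ 1`. -/
noncomputable def fdpair (a : ℤ) : ℤ × ℕ := by
  classical
  exact if h : ∃ p : ℤ × ℕ, IsFundDisc p.1 ∧ 1 ≤ p.2 ∧ a = p.1 * (p.2 : ℤ) ^ 2
    then h.choose else (0, 0)

/-- `D_n`, the fundamental discriminant with `-n = D_n · f_n²`. -/
noncomputable def Dn (n : ℕ) : ℤ := (fdpair (-(n : ℤ))).1

/-- `f_n`, the conductor with `-n = D_n · f_n²`. -/
noncomputable def fn (n : ℕ) : ℕ := (fdpair (-(n : ℤ))).2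

/-- `f_p := p^(v_p f)`, the `p`-part of `f`. -/
def ppart (f p : ℕ) : ℕ := p ^ f.factorization p

/-- The weight `w(a,b,c)` in the definition of the Hurwitz class number. -/
def hurwitzW (a b c : ℤ) : ℚ :=
  if a = b ∧ b = c then 3 else if b = 0 ∧ a = c then 2 else 1

/-- The Hurwitz class number `H(n)`: `H(0) = -1/12`, and for `n > 0` the weighted
count of reduced forms of discriminant `-n` (automatically `0` for `n ≡ 1, 2 mod 4`). -/
noncomputable def hurwitz (n : ℕ) : ℚ :=
  if n = 0 then -(1 / 12)
  else
    ∑ a ∈ Finset.Icc (1 : ℤ) (n : ℤ), ∑ b ∈ Finset.Icc (-(n : ℤ)) (n : ℤ),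
      ∑ c ∈ Finset.Icc (1 : ℤ) ((n : ℤ) ^ 2 + (n : ℤ)),
        if b ^ 2 - 4 * a * c = -(n : ℤ) ∧ |b| ≤ a ∧ a ≤ c ∧ ((|b| = a ∨ a = c) → 0 ≤ b)
        then (hurwitzW a b c)⁻¹ else 0

/-- `L(0, χ_D) = -(1/|D|) Σ_{a=1}^{|D|} (D/a) a` for a fundamental discriminant `D < 0`. -/
noncomputable def Lval (D : ℤ) : ℚ :=
  -(1 / (D.natAbs : ℚ)) * ∑ a ∈ Finset.Icc 1 D.natAbs, (kron D a : ℚ) * (a : ℚ)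

/-- `L_m(0, χ_D) = L(0,χ_D) ∏_{p ∣ m} (1 - (D/p))`. -/
noncomputable def LvalM (m : ℕ) (D : ℤ) : ℚ :=
  Lval D * ∏ p ∈ m.primeFactors, (1 - (kron D p : ℚ))

/-- `σ_{m,N,1}(r) = Σ_{d ∣ r, gcd(d,m)=1, gcd(r/d, N/m)=1} d`. -/
def sigmaMN (m N r : ℕ) : ℕ :=
  ∑ d ∈ r.divisors, if Nat.gcd d m = 1 ∧ Nat.gcd (r / d) (N / m) = 1 then d else 0

/-- The Pei–Wang generalized Hurwitz class number `H_{m,N}(n)`. -/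
noncomputable def HPW (m N n : ℕ) : ℚ :=
  if n = 0 then
    if m = N then -(1 / 12) * ∏ p ∈ N.primeFactors, (1 - (p : ℚ)) else 0
  else if n % 4 = 0 ∨ n % 4 = 3 then
    LvalM m (Dn n) *
      (∏ p ∈ (N / m).primeFactors,
        (1 - (kron (Dn n) p : ℚ) / (p : ℚ)) / (1 - ((p : ℚ)⁻¹) ^ 2)) *
      ∑ a ∈ (fn n).divisors,
        if Nat.gcd a N = 1 then
          (ArithmeticFunction.moebius a : ℚ) * (kron (Dn n) a : ℚ) *
            (sigmaMN m N (fn n / a) : ℚ)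
        else 0
  else 0

/-- The Li–Skoruppa–Zhou modified class number `H^{(N₁,N₂)}(n)`. -/
noncomputable def HLSZ (N₁ N₂ n : ℕ) : ℚ :=
  if n = 0 then
    -(1 / 12) * (∏ p ∈ N₁.primeFactors, (1 - (p : ℚ))) *
      ∏ p ∈ N₂.primeFactors, ((p : ℚ) + 1)
  else if n % 4 = 0 ∨ n % 4 = 3 then
    hurwitz (n / (∏ p ∈ (N₁ * N₂).primeFactors, ppart (fn n) p) ^ 2) *
      (∏ p ∈ N₁.primeFactors, (1 - (kron (Dn n) p : ℚ))) *
      ∏ p ∈ N₂.primeFactors,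
        ((2 * (p : ℚ) * (ppart (fn n) p : ℚ) - (p : ℚ) - 1 -
            (kron (Dn n) p : ℚ) * (2 * (ppart (fn n) p : ℚ) - (p : ℚ) - 1)) /
          ((p : ℚ) - 1))
  else 0

/-- Number of distinct prime divisors, `ω(N)`. -/
def omegaN (N : ℕ) : ℕ := N.primeFactors.card

/-- The local factor `A_p(n)`, for `-n = D·f²`. -/
noncomputable def locA (D : ℤ) (f p : ℕ) : ℚ :=
  (ppart f p : ℚ) * (1 - (kron D p : ℚ) / (p : ℚ)) / (1 - ((p : ℚ)⁻¹) ^ 2)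

/-- The local factor `B_p(n)`, for `-n = D·f²`. -/
noncomputable def locB (D : ℤ) (f p : ℕ) : ℚ :=
  (2 * (p : ℚ) * (ppart f p : ℚ) - (p : ℚ) - 1 -
      (kron D p : ℚ) * (2 * (ppart f p : ℚ) - (p : ℚ) - 1)) / ((p : ℚ) - 1)

/-- The local factor `C_p(n)`, for `-n = D·f²`. -/
noncomputable def locC (D : ℤ) (p : ℕ) : ℚ := 1 - (kron D p : ℚ)

/-- The local factor `D_p(n) = σ₁(f_p) - σ₁(f_p/p)·(D/p)`, for `-n = D·f²`. -/
noncomputable def locD (D : ℤ) (f p : ℕ) : ℚ :=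
  (ArithmeticFunction.sigma 1 (ppart f p) : ℚ) -
    (ArithmeticFunction.sigma 1 (ppart f p / p) : ℚ) * (kron D p : ℚ)

/-- The character local factor `D_p(ℓ,n) = σ₁(f_p) - σ₁(f_p/p)·(D_{ℓ,n}/p)·(p/ℓ)`. -/
noncomputable def locDchar (l : ℕ) (D : ℤ) (f p : ℕ) : ℚ :=
  (ArithmeticFunction.sigma 1 (ppart f p) : ℚ) -
    (ArithmeticFunction.sigma 1 (ppart f p / p) : ℚ) * (kron D p : ℚ) *
      (jacobiSym (p : ℤ) l : ℚ)

/-- The Pei–Wang generalized class number `H(ℓ, m, N; n)` with character `χ_ℓ`. -/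
noncomputable def HPWchar (l m N n : ℕ) : ℚ := by
  classical
  exact
    if n = 0 then
      if m = N then -(1 / 12) * ∏ p ∈ N.primeFactors, (1 - (p : ℚ)) else 0
    else if (∃ q : ℤ × ℕ, IsFundDisc q.1 ∧ 1 ≤ q.2 ∧
            -(((-1 : ℤ) ^ ((l - 1) / 2)) * (n : ℤ)) = q.1 * (q.2 : ℤ) ^ 2) ∧
        (∃ q : ℤ × ℕ, IsFundDisc q.1 ∧ 1 ≤ q.2 ∧
            -((l : ℤ) * (n : ℤ)) = q.1 * (q.2 : ℤ) ^ 2) then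
      LvalM m (fdpair (-((l : ℤ) * (n : ℤ)))).1 *
        (∏ p ∈ (N / m).primeFactors,
          (1 - (kron (fdpair (-((l : ℤ) * (n : ℤ)))).1 p : ℚ) / (p : ℚ)) /
            (1 - ((p : ℚ)⁻¹) ^ 2)) *
        ((Int.gcd (l : ℤ) (fdpair (-(((-1 : ℤ) ^ ((l - 1) / 2)) * (n : ℤ)))).1 : ℚ) /
          (Nat.gcd (Int.gcd (l : ℤ) (fdpair (-(((-1 : ℤ) ^ ((l - 1) / 2)) * (n : ℤ)))).1) m : ℚ)) *
        ∑ a ∈ (fdpair (-(((-1 : ℤ) ^ ((l - 1) / 2)) * (n : ℤ)))).2.divisors,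
          if Nat.gcd a N = 1 then
            (ArithmeticFunction.moebius a : ℚ) *
              (kron (fdpair (-(((-1 : ℤ) ^ ((l - 1) / 2)) * (n : ℤ)))).1 a : ℚ) *
              (jacobiSym (a : ℤ) l : ℚ) *
              (sigmaMN m N ((fdpair (-(((-1 : ℤ) ^ ((l - 1) / 2)) * (n : ℤ)))).2 / a) : ℚ)
          else 0
    else 0

/-!
Once `(Dₙ, fₙ)` is identified with `(D, f)` (the decomposition `-n = D f²` is unique because
`D` is determined by the squarefree kernel of `-n`), the divisor sum in `H_{m,N}(n)` is the value
at `f` of the Dirichlet convolution of the multiplicative functions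
`a ↦ 1_{(a,N)=1} μ(a) (D/a)` and `σ_{m,N,1} = (d ↦ 1_{(d,m)=1} d) * (e ↦ 1_{(e,N/m)=1})`.
It therefore factors over the prime powers `p^k ∥ f`: for `p ∤ N` the factor is
`σ₁(p^k) - (D/p) σ₁(p^(k-1)) = D_p(n)`, for `p ∣ m` it is `1`, and for `p ∣ N/m` it is `p^k = f_p`.
The Euler factors of `L_m` and of the product over `p ∣ N/m` then combine into `C_p` and `A_p`.
-/

open ArithmeticFunction Finset

theorem Nat.eq_and_eq_of_mul_sq_eq_of_squarefree {a b s t : ℕ} (ha : Squarefree a)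
    (hb : Squarefree b) (ht : t ≠ 0) (h : a * s ^ 2 = b * t ^ 2) : a = b ∧ s = t := by
  have hs : s ≠ 0 := by
    rintro rfl
    simp [hb.ne_zero, ht] at h
  obtain rfl : a = b := Nat.eq_of_factorization_eq ha.ne_zero hb.ne_zero fun p => by
    have hp := congrArg (·.factorization p) h
    simp only [Nat.factorization_mul ha.ne_zero (pow_ne_zero 2 hs),
      Nat.factorization_mul hb.ne_zero (pow_ne_zero 2 ht), Nat.factorization_pow,
      Finsupp.add_apply, Finsupp.smul_apply, smul_eq_mul] at hp
    have := ha.natFactorization_le_one p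
    have := hb.natFactorization_le_one p
    omega
  exact ⟨rfl, Nat.pow_left_injective two_ne_zero
    (Nat.eq_of_mul_eq_mul_left (Nat.pos_of_ne_zero ha.ne_zero) h)⟩

theorem Int.eq_and_eq_of_mul_sq_eq_of_squarefree {a b : ℤ} {s t : ℕ} (ha : Squarefree a)
    (hb : Squarefree b) (ht : t ≠ 0) (h : a * (s : ℤ) ^ 2 = b * (t : ℤ) ^ 2) :
    a = b ∧ s = t := by
  obtain ⟨-, rfl⟩ := Nat.eq_and_eq_of_mul_sq_eq_of_squarefree (Int.squarefree_natAbs.2 ha)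
    (Int.squarefree_natAbs.2 hb) ht
    (by simpa [Int.natAbs_mul, Int.natAbs_pow] using congrArg Int.natAbs h)
  exact ⟨mul_right_cancel₀ (by positivity) h, rfl⟩

def fundDiscCofactor (s : ℤ) : ℕ := if s % 4 = 1 then 1 else 2

theorem fundDiscCofactor_ne_zero (s : ℤ) : fundDiscCofactor s ≠ 0 := by
  unfold fundDiscCofactor
  split_ifs <;> norm_num

theorem IsFundDisc.exists_squarefree_eq_mul_sq {D : ℤ} (hD : IsFundDisc D) (hD1 : D ≠ 1) :
    ∃ s : ℤ, Squarefree s ∧ D = s * (fundDiscCofactor s : ℤ) ^ 2 := by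
  rcases hD with rfl | ⟨h1, hsf⟩ | ⟨k, rfl, hk, hsf⟩
  · exact absurd rfl hD1
  · exact ⟨D, hsf, by simp [fundDiscCofactor, h1]⟩
  · refine ⟨k, hsf, ?_⟩
    rw [fundDiscCofactor, if_neg (by omega)]
    ring

theorem IsFundDisc.eq_and_eq_of_mul_sq_eq {D₁ D₂ : ℤ} {f₁ f₂ : ℕ} (h₁ : IsFundDisc D₁)
    (h₂ : IsFundDisc D₂) (hneg : D₁ * (f₁ : ℤ) ^ 2 < 0)
    (h : D₁ * (f₁ : ℤ) ^ 2 = D₂ * (f₂ : ℤ) ^ 2) : D₁ = D₂ ∧ f₁ = f₂ := by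
  have hne_one : ∀ {D : ℤ} {f : ℕ}, D * (f : ℤ) ^ 2 < 0 → D ≠ 1 := by
    rintro D f hDf rfl
    nlinarith [sq_nonneg (f : ℤ)]
  have hf₂ : f₂ ≠ 0 := by
    rintro rfl
    simp [h] at hneg
  obtain ⟨s₁, hs₁, rfl⟩ := h₁.exists_squarefree_eq_mul_sq (hne_one hneg)
  obtain ⟨s₂, hs₂, rfl⟩ := h₂.exists_squarefree_eq_mul_sq (hne_one (h ▸ hneg))
  obtain ⟨rfl, he⟩ := Int.eq_and_eq_of_mul_sq_eq_of_squarefree (s := fundDiscCofactor s₁ * f₁)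
    (t := fundDiscCofactor s₂ * f₂) hs₁ hs₂ (mul_ne_zero (fundDiscCofactor_ne_zero s₂) hf₂)
    (by push_cast; linear_combination h)
  exact ⟨rfl, Nat.eq_of_mul_eq_mul_left (Nat.pos_of_ne_zero (fundDiscCofactor_ne_zero s₁)) he⟩

theorem Dn_eq_and_fn_eq {n : ℕ} {D : ℤ} {f : ℕ} (hn : 0 < n) (hD : IsFundDisc D) (hf : 1 ≤ f)
    (hDf : -(n : ℤ) = D * (f : ℤ) ^ 2) : Dn n = D ∧ fn n = f := by
  have hex : ∃ q : ℤ × ℕ, IsFundDisc q.1 ∧ 1 ≤ q.2 ∧ -(n : ℤ) = q.1 * (q.2 : ℤ) ^ 2 :=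
    ⟨(D, f), hD, hf, hDf⟩
  obtain ⟨hq, -, hqdf⟩ := hex.choose_spec
  rw [Dn, fn, fdpair, dif_pos hex]
  exact hq.eq_and_eq_of_mul_sq_eq hD (by omega) (hqdf.symm.trans hDf)

namespace ArithmeticFunction

variable {R : Type*}

def coprimeRestrict [Zero R] (g : ArithmeticFunction R) (m : ℕ) : ArithmeticFunction R :=
  ⟨fun d => if d.Coprime m then g d else 0, by simp⟩

theorem coprimeRestrict_apply [Zero R] (g : ArithmeticFunction R) (m d : ℕ) :
    g.coprimeRestrict m d = if d.Coprime m then g d else 0 := rfl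

theorem coprimeRestrict_apply_of_coprime [Zero R] (g : ArithmeticFunction R) {m d : ℕ}
    (hd : d.Coprime m) : g.coprimeRestrict m d = g d :=
  if_pos hd

theorem coprimeRestrict_apply_prime_pow_of_dvd [Zero R] (g : ArithmeticFunction R)
    {m p j : ℕ} (hp : p.Prime) (hpm : p ∣ m) (hj : j ≠ 0) : g.coprimeRestrict m (p ^ j) = 0 :=
  if_neg fun hco => hp.one_lt.ne' (Nat.eq_one_of_dvd_coprimes hco (dvd_pow_self p hj) hpm)

theorem IsMultiplicative.coprimeRestrict [MonoidWithZero R] {g : ArithmeticFunction R}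
    (hg : g.IsMultiplicative) (m : ℕ) : (g.coprimeRestrict m).IsMultiplicative := by
  refine ⟨by simp [coprimeRestrict_apply, hg.map_one], fun {a b} hab => ?_⟩
  simp only [coprimeRestrict_apply, Nat.coprime_mul_iff_left]
  split_ifs <;> simp_all [hg.map_mul_of_coprime hab]

theorem mul_apply_prime_pow [Semiring R] (g h : ArithmeticFunction R) {p : ℕ} (hp : p.Prime)
    (i : ℕ) :
    (g * h) (p ^ i) = ∑ j ∈ range (i + 1), g (p ^ j) * h (p ^ (i - j)) := by
  rw [mul_apply, Nat.sum_divisorsAntidiagonal (f := fun a b => g a * h b),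
    Nat.sum_divisors_prime_pow hp]
  refine sum_congr rfl fun j hj => ?_
  rw [Nat.pow_div (by simpa [Nat.lt_succ_iff] using hj) hp.pos]

theorem mul_apply_prime_pow_succ_of_apply_prime_pow_eq_zero [Semiring R]
    {g : ArithmeticFunction R} (h : ArithmeticFunction R) {p : ℕ} (hp : p.Prime) (hg1 : g 1 = 1)
    (hg : ∀ j, 2 ≤ j → g (p ^ j) = 0) (k : ℕ) :
    (g * h) (p ^ (k + 1)) = h (p ^ (k + 1)) + g p * h (p ^ k) := by
  rw [mul_apply_prime_pow g h hp, sum_range_succ', sum_range_succ',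
    sum_eq_zero fun j _ => by rw [hg (j + 1 + 1) (by omega), zero_mul]]
  simp [hg1, add_comm]

theorem coprimeRestrict_mul_apply_prime_pow_of_dvd [Semiring R] {g : ArithmeticFunction R}
    (hg1 : g 1 = 1) (h : ArithmeticFunction R) {m p : ℕ} (hp : p.Prime) (hpm : p ∣ m) (k : ℕ) :
    (g.coprimeRestrict m * h) (p ^ k) = h (p ^ k) := by
  rw [mul_apply_prime_pow _ h hp, sum_eq_single 0]
  · simp [coprimeRestrict_apply_of_coprime _ (Nat.coprime_one_left m), hg1]
  · intro j _ hj
    rw [coprimeRestrict_apply_prime_pow_of_dvd g hp hpm hj, zero_mul]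
  · simp

theorem coprimeRestrict_mul_coprimeRestrict_apply_of_coprime [Semiring R]
    (g h : ArithmeticFunction R) {m c n : ℕ} (hm : n.Coprime m) (hc : n.Coprime c) :
    (g.coprimeRestrict m * h.coprimeRestrict c) n = (g * h) n := by
  simp only [mul_apply]
  refine sum_congr rfl fun x hx => ?_
  have hx' := Nat.mem_divisorsAntidiagonal.1 hx
  rw [coprimeRestrict_apply_of_coprime _ (hm.coprime_dvd_left (Dvd.intro _ hx'.1)),
    coprimeRestrict_apply_of_coprime _ (hc.coprime_dvd_left (Dvd.intro_left _ hx'.1))]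

theorem IsMultiplicative.apply_eq_prod_filter_not_dvd_mul_prod_primeFactors
    [CommMonoidWithZero R] {F : ArithmeticFunction R} (hF : F.IsMultiplicative) {f N : ℕ}
    (hf : f ≠ 0) (hN : N ≠ 0) :
    F f = (∏ p ∈ f.primeFactors.filter (¬ · ∣ N), F (p ^ f.factorization p)) *
      ∏ p ∈ N.primeFactors, F (p ^ f.factorization p) := by
  rw [hF.multiplicative_factorization F hf, Nat.prod_factorization_eq_prod_primeFactors,
    ← prod_filter_mul_prod_filter_not f.primeFactors (¬ · ∣ N)]
  congr 1
  refine prod_subset (fun p hp => ?_) fun p hpN hpf => ?_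
  · simp only [mem_filter, not_not, Nat.mem_primeFactors] at hp ⊢
    exact ⟨hp.1.1, hp.2, hN⟩
  · have hpf : ¬p ∣ f := fun hdvd => hpf (mem_filter.2
      ⟨Nat.mem_primeFactors.2 ⟨Nat.prime_of_mem_primeFactors hpN, hdvd, hf⟩,
        not_not.2 (Nat.dvd_of_mem_primeFactors hpN)⟩)
    rw [Nat.factorization_eq_zero_of_not_dvd hpf, pow_zero, hF.map_one]

end ArithmeticFunction

open scoped ArithmeticFunction.Moebius ArithmeticFunction.zeta ArithmeticFunction.sigma

theorem kron_one (D : ℤ) : kron D 1 = 1 := by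
  simp [kron]

theorem kron_mul (D : ℤ) {a b : ℕ} (ha : a ≠ 0) (hb : b ≠ 0) :
    kron D (a * b) = kron D a * kron D b := by
  rw [kron, Nat.factorization_mul ha hb]
  exact Finsupp.prod_add_index' (fun _ => pow_zero _) fun _ _ _ => pow_add _ _ _

def moebiusKron (D : ℤ) : ArithmeticFunction ℚ :=
  ⟨fun a => (μ a : ℚ) * (kron D a : ℚ), by simp⟩

theorem moebiusKron_apply (D : ℤ) (a : ℕ) : moebiusKron D a = (μ a : ℚ) * (kron D a : ℚ) := rfl

theorem isMultiplicative_moebiusKron (D : ℤ) : (moebiusKron D).IsMultiplicative := by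
  refine ⟨by simp [moebiusKron_apply, kron_one], fun {a b} hab => ?_⟩
  rcases eq_or_ne a 0 with rfl | ha
  · simp [moebiusKron_apply]
  rcases eq_or_ne b 0 with rfl | hb
  · simp [moebiusKron_apply]
  simp only [moebiusKron_apply, isMultiplicative_moebius.map_mul_of_coprime hab,
    kron_mul D ha hb]
  push_cast
  ring

theorem moebiusKron_apply_prime (D : ℤ) {p : ℕ} (hp : p.Prime) :
    moebiusKron D p = -(kron D p : ℚ) := by
  simp [moebiusKron_apply, moebius_apply_prime hp]

theorem moebiusKron_apply_prime_pow (D : ℤ) {p j : ℕ} (hp : p.Prime) (hj : 2 ≤ j) :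
    moebiusKron D (p ^ j) = 0 := by
  simp [moebiusKron_apply, moebius_apply_prime_pow hp (by omega : j ≠ 0), show j ≠ 1 by omega]

def sigmaCoprime (m c : ℕ) : ArithmeticFunction ℕ :=
  ArithmeticFunction.id.coprimeRestrict m * zeta.coprimeRestrict c

theorem sigmaMN_eq_sigmaCoprime {m : ℕ} (hm : m ≠ 0) (c r : ℕ) :
    sigmaMN m (m * c) r = sigmaCoprime m c r := by
  rw [sigmaMN, Nat.mul_div_cancel_left c (Nat.pos_of_ne_zero hm), sigmaCoprime, mul_apply,
    Nat.sum_divisorsAntidiagonal (f := fun a b =>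
      ArithmeticFunction.id.coprimeRestrict m a * zeta.coprimeRestrict c b)]
  refine sum_congr rfl fun d hd => ?_
  have hrd : r / d ≠ 0 := (Nat.div_pos (Nat.divisor_le hd) (Nat.pos_of_mem_divisors hd)).ne'
  simp only [coprimeRestrict_apply, id_apply, zeta_apply, if_neg hrd, Nat.Coprime]
  split_ifs <;> simp_all

def pwDivisorSum (D : ℤ) (m c : ℕ) : ArithmeticFunction ℚ :=
  (moebiusKron D).coprimeRestrict (m * c) * ↑(sigmaCoprime m c)

theorem isMultiplicative_sigmaCoprime (m c : ℕ) : (sigmaCoprime m c).IsMultiplicative :=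
  (isMultiplicative_id.coprimeRestrict m).mul (isMultiplicative_zeta.coprimeRestrict c)

theorem isMultiplicative_pwDivisorSum (D : ℤ) (m c : ℕ) :
    (pwDivisorSum D m c).IsMultiplicative :=
  ((isMultiplicative_moebiusKron D).coprimeRestrict _).mul
    (isMultiplicative_sigmaCoprime m c).natCast

theorem sum_divisors_eq_pwDivisorSum_apply (D : ℤ) {m : ℕ} (hm : m ≠ 0) (c f : ℕ) :
    (∑ a ∈ f.divisors, if Nat.gcd a (m * c) = 1 then
        (μ a : ℚ) * (kron D a : ℚ) * (sigmaMN m (m * c) (f / a) : ℚ) else 0) =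
      pwDivisorSum D m c f := by
  rw [pwDivisorSum, mul_apply, Nat.sum_divisorsAntidiagonal (f := fun a b =>
    (moebiusKron D).coprimeRestrict (m * c) a * (sigmaCoprime m c : ArithmeticFunction ℚ) b)]
  refine sum_congr rfl fun a _ => ?_
  rw [coprimeRestrict_apply, natCoe_apply, sigmaMN_eq_sigmaCoprime hm, moebiusKron_apply]
  split_ifs <;> simp_all

theorem pwDivisorSum_apply_prime_pow_succ_of_not_dvd (D : ℤ) {m c p : ℕ} (hp : p.Prime)
    (hpm : ¬p ∣ m) (hpc : ¬p ∣ c) (k : ℕ) :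
    pwDivisorSum D m c (p ^ (k + 1)) =
      (σ 1 (p ^ (k + 1)) : ℚ) - (σ 1 (p ^ k) : ℚ) * (kron D p : ℚ) := by
  have hσ (i : ℕ) : sigmaCoprime m c (p ^ i) = σ 1 (p ^ i) := by
    rw [sigmaCoprime, coprimeRestrict_mul_coprimeRestrict_apply_of_coprime _ _
      (Nat.Coprime.pow_left i (hp.coprime_iff_not_dvd.2 hpm))
      (Nat.Coprime.pow_left i (hp.coprime_iff_not_dvd.2 hpc)),
      ← pow_one_eq_id, mul_comm, zeta_mul_pow_eq_sigma]
  have hpmc : p.Coprime (m * c) :=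
    hp.coprime_iff_not_dvd.2 fun h => (hp.dvd_mul.1 h).elim hpm hpc
  rw [pwDivisorSum, mul_apply_prime_pow_succ_of_apply_prime_pow_eq_zero _ hp
      ((isMultiplicative_moebiusKron D).coprimeRestrict _).map_one
      fun j hj => by rw [coprimeRestrict_apply, moebiusKron_apply_prime_pow D hp hj, ite_self],
    natCoe_apply, natCoe_apply, hσ, hσ, coprimeRestrict_apply_of_coprime _ hpmc,
    moebiusKron_apply_prime D hp]
  ring

theorem pwDivisorSum_apply_prime_pow_of_dvd_left (D : ℤ) {m c p : ℕ} (hp : p.Prime)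
    (hpm : p ∣ m) (hpc : ¬p ∣ c) (k : ℕ) : pwDivisorSum D m c (p ^ k) = 1 := by
  rw [pwDivisorSum, coprimeRestrict_mul_apply_prime_pow_of_dvd
      (isMultiplicative_moebiusKron D).map_one _ hp (dvd_mul_of_dvd_left hpm c),
    natCoe_apply, sigmaCoprime,
    coprimeRestrict_mul_apply_prime_pow_of_dvd isMultiplicative_id.map_one _ hp hpm,
    coprimeRestrict_apply_of_coprime _ (Nat.Coprime.pow_left k (hp.coprime_iff_not_dvd.2 hpc)),
    zeta_apply_ne (pow_ne_zero k hp.ne_zero), Nat.cast_one]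

theorem pwDivisorSum_apply_prime_pow_of_dvd_right (D : ℤ) {m c p : ℕ} (hp : p.Prime)
    (hpm : ¬p ∣ m) (hpc : p ∣ c) (k : ℕ) : pwDivisorSum D m c (p ^ k) = (p : ℚ) ^ k := by
  rw [pwDivisorSum, coprimeRestrict_mul_apply_prime_pow_of_dvd
      (isMultiplicative_moebiusKron D).map_one _ hp (dvd_mul_of_dvd_right hpc m),
    natCoe_apply, sigmaCoprime, mul_comm (ArithmeticFunction.id.coprimeRestrict m),
    coprimeRestrict_mul_apply_prime_pow_of_dvd isMultiplicative_zeta.map_one _ hp hpc,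
    coprimeRestrict_apply_of_coprime _ (Nat.Coprime.pow_left k (hp.coprime_iff_not_dvd.2 hpm)),
    id_apply, Nat.cast_pow]

theorem pwDivisorSum_apply (D : ℤ) {m c f : ℕ} (hmc : m.Coprime c) (hm : m ≠ 0) (hc : c ≠ 0)
    (hf : f ≠ 0) :
    pwDivisorSum D m c f = (∏ p ∈ f.primeFactors.filter fun p => ¬p ∣ m * c, locD D f p) *
      ∏ p ∈ c.primeFactors, (ppart f p : ℚ) := by
  have hdisj {p : ℕ} (hp : p.Prime) (hpm : p ∣ m) (hpc : p ∣ c) : False :=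
    hp.one_lt.ne' (Nat.eq_one_of_dvd_coprimes hmc hpm hpc)
  have hcoprime_part : ∏ p ∈ f.primeFactors.filter (fun p => ¬p ∣ m * c),
      pwDivisorSum D m c (p ^ f.factorization p) =
        ∏ p ∈ f.primeFactors.filter (fun p => ¬p ∣ m * c), locD D f p := by
    refine prod_congr rfl fun p hp => ?_
    obtain ⟨hpf, hpmc⟩ := mem_filter.1 hp
    have hp' := Nat.prime_of_mem_primeFactors hpf
    obtain ⟨k, hk⟩ := Nat.exists_eq_add_one_of_ne_zero
      (hp'.factorization_pos_of_dvd hf (Nat.dvd_of_mem_primeFactors hpf)).ne'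
    rw [hk, pwDivisorSum_apply_prime_pow_succ_of_not_dvd D hp'
      (fun h => hpmc (dvd_mul_of_dvd_left h c)) (fun h => hpmc (dvd_mul_of_dvd_right h m)),
      locD, ppart, hk, pow_succ,
      Nat.mul_div_cancel _ hp'.pos]
  have hm_part : ∏ p ∈ m.primeFactors, pwDivisorSum D m c (p ^ f.factorization p) = 1 := by
    refine prod_eq_one fun p hp => ?_
    have hp' := Nat.prime_of_mem_primeFactors hp
    have hpm := Nat.dvd_of_mem_primeFactors hp
    exact pwDivisorSum_apply_prime_pow_of_dvd_left D hp' hpm (hdisj hp' hpm) _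
  have hc_part : ∏ p ∈ c.primeFactors, pwDivisorSum D m c (p ^ f.factorization p) =
      ∏ p ∈ c.primeFactors, (ppart f p : ℚ) := by
    refine prod_congr rfl fun p hp => ?_
    have hp' := Nat.prime_of_mem_primeFactors hp
    have hpc := Nat.dvd_of_mem_primeFactors hp
    rw [pwDivisorSum_apply_prime_pow_of_dvd_right D hp' (hdisj hp' · hpc) hpc, ppart,
      Nat.cast_pow]
  rw [(isMultiplicative_pwDivisorSum D m c).apply_eq_prod_filter_not_dvd_mul_prod_primeFactors
      hf (mul_ne_zero hm hc),
    Nat.primeFactors_mul hm hc, prod_union hmc.disjoint_primeFactors, hcoprime_part, hm_part,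
    hc_part, one_mul]

theorem PW_local_general (N m n : ℕ) (hNsf : Squarefree N)
    (hm : m ∣ N) (hn : 0 < n) (h4 : n % 4 = 0 ∨ n % 4 = 3)
    (D : ℤ) (f : ℕ) (hD : IsFundDisc D) (hf : 1 ≤ f)
    (hDf : -(n : ℤ) = D * (f : ℤ) ^ 2) :
    HPW m N n =
      Lval D * (∏ p ∈ f.primeFactors.filter fun p => ¬p ∣ N, locD D f p) *
        (∏ p ∈ m.primeFactors, locC D p) *
        ∏ p ∈ (N / m).primeFactors, locA D f p := by
  obtain ⟨hDn, hfn⟩ := Dn_eq_and_fn_eq hn hD hf hDf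
  obtain ⟨c, rfl⟩ := hm
  have hm0 : m ≠ 0 := left_ne_zero_of_mul hNsf.ne_zero
  have hc0 : c ≠ 0 := right_ne_zero_of_mul hNsf.ne_zero
  rw [HPW, if_neg hn.ne', if_pos h4, hDn, hfn, sum_divisors_eq_pwDivisorSum_apply D hm0,
    pwDivisorSum_apply D (Nat.coprime_of_squarefree_mul hNsf) hm0 hc0 (by omega),
    Nat.mul_div_cancel_left c (Nat.pos_of_ne_zero hm0), LvalM]
  simp only [locC, locA, mul_div_assoc, prod_mul_distrib]
  ring

/-- Local expression for the Pei–Wang class number. -/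
theorem PW_local (N m n : ℕ) (hN : 0 < N) (hNodd : Odd N) (hNsf : Squarefree N)
    (hm : m ∣ N) (hn : 0 < n) (h4 : n % 4 = 0 ∨ n % 4 = 3)
    (D : ℤ) (f : ℕ) (hD : IsFundDisc D) (hf : 1 ≤ f)
    (hDf : -(n : ℤ) = D * (f : ℤ) ^ 2) :
    HPW m N n =
      Lval D * (∏ p ∈ f.primeFactors.filter fun p => ¬p ∣ N, locD D f p) *
        (∏ p ∈ m.primeFactors, locC D p) *
        ∏ p ∈ (N / m).primeFactors, locA D f p :=
  PW_local_general N m n hNsf hm hn h4 D f hD hf hDf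
end

section
/- Let p be a prime and let n > 0 be an integer with n ≡ 0 or 3 (mod 4), written as −n = D_n·f_n² with D_n a fundamental discriminant. Then the local factors satisfy B_p(n) = (p + 1)·((2/p)·A_p(n) + (1/(1 − p))·C_p(n)) and A_p(n) = (p/(2(p + 1)))·B_p(n) + (p/(2(p − 1)))·C_p(n) (equalities of rational numbers). -/
open scoped BigOperators

/-- The identities are pure algebra in `p`, `f_p` and `χ_p`: clearing the denominators
`p`, `p - 1` and `p² - 1` turns the first into a polynomial identity, and the second is the
first solved for `A_p`. -/
theorem locB_eq_locA_locC (D : ℤ) (f : ℕ) {p : ℕ} (hp : 1 < p) :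
    locB D f p =
      ((p : ℚ) + 1) * ((2 / (p : ℚ)) * locA D f p + (1 / (1 - (p : ℚ))) * locC D p) := by
  have hp' : (1 : ℚ) < p := by exact_mod_cast hp
  have hp0 : (p : ℚ) ≠ 0 := by positivity
  have hp1 : (p : ℚ) - 1 ≠ 0 := sub_ne_zero.mpr hp'.ne'
  have hp1' : 1 - (p : ℚ) ≠ 0 := sub_ne_zero.mpr hp'.ne
  have hpp1 : (p : ℚ) + 1 ≠ 0 := by positivity
  have hinv : 1 - ((p : ℚ)⁻¹) ^ 2 = ((p : ℚ) - 1) * ((p : ℚ) + 1) / (p : ℚ) ^ 2 := by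
    field_simp
    ring
  rw [locA, locB, locC, hinv]
  field_simp
  ring

theorem locA_eq_locB_locC (D : ℤ) (f : ℕ) {p : ℕ} (hp : 1 < p) :
    locA D f p =
      ((p : ℚ) / (2 * ((p : ℚ) + 1))) * locB D f p +
        ((p : ℚ) / (2 * ((p : ℚ) - 1))) * locC D p := by
  have hp' : (1 : ℚ) < p := by exact_mod_cast hp
  have hp0 : (p : ℚ) ≠ 0 := by positivity
  have hp1 : (p : ℚ) - 1 ≠ 0 := sub_ne_zero.mpr hp'.ne'
  have hp1' : 1 - (p : ℚ) ≠ 0 := sub_ne_zero.mpr hp'.ne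
  have hpp1 : (p : ℚ) + 1 ≠ 0 := by positivity
  rw [locB_eq_locA_locC D f hp]
  field_simp
  ring

theorem local_relations_AB_general (p : ℕ) (hp : p.Prime) (D : ℤ) (f : ℕ) :
    locB D f p =
        ((p : ℚ) + 1) * ((2 / (p : ℚ)) * locA D f p + (1 / (1 - (p : ℚ))) * locC D p) ∧
      locA D f p =
        ((p : ℚ) / (2 * ((p : ℚ) + 1))) * locB D f p +
          ((p : ℚ) / (2 * ((p : ℚ) - 1))) * locC D p :=
  ⟨locB_eq_locA_locC D f hp.one_lt, locA_eq_locB_locC D f hp.one_lt⟩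

/-- Lemma: linear relations between the local factors `A_p`, `B_p`, `C_p`. -/
theorem local_relations_AB (p : ℕ) (hp : p.Prime) (n : ℕ) (hn : 0 < n)
    (h4 : n % 4 = 0 ∨ n % 4 = 3) (D : ℤ) (f : ℕ) (hD : IsFundDisc D) (hf : 1 ≤ f)
    (hDf : -(n : ℤ) = D * (f : ℤ) ^ 2) :
    locB D f p =
        ((p : ℚ) + 1) * ((2 / (p : ℚ)) * locA D f p + (1 / (1 - (p : ℚ))) * locC D p) ∧
      locA D f p =
        ((p : ℚ) / (2 * ((p : ℚ) + 1))) * locB D f p +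
          ((p : ℚ) / (2 * ((p : ℚ) - 1))) * locC D p :=
  local_relations_AB_general p hp D f
end

section
/- Let p be a prime and let n > 0 be an integer with n ≡ 0 or 3 (mod 4), written as −n = D_n·f_n² with D_n a fundamental discriminant. Then the local factors satisfy D_p(n) = ((p + 1)/p)·A_p(n) + (1/(1 − p))·C_p(n) and D_p(n) = (1/2)·B_p(n) + (1/2)·C_p(n) (equalities of rational numbers). -/
open scoped BigOperators

/-
The identities are pure algebra in `χ = (D/p)` and `x = f_p = p^k`. Since
`(p - 1)·σ₁(p^k) = p^(k+1) - 1` and `(p - 1)·σ₁(p^k / p) = p^k - 1` (also for `k = 0`, where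
`p^0 / p = 0` in `ℕ`), one has `(p - 1)·D_p = (p x - 1) - (x - 1) χ`, and both right-hand sides
reduce to this after clearing denominators.
-/

open ArithmeticFunction
open scoped ArithmeticFunction.sigma

theorem sub_one_mul_sigma_one_prime_pow {R : Type*} [CommRing R] {p : ℕ} (hp : p.Prime) (k : ℕ) :
    ((p : R) - 1) * (σ 1 (p ^ k) : R) = (p : R) ^ (k + 1) - 1 := by
  rw [sigma_one_apply_prime_pow hp, mul_comm]
  push_cast
  exact geom_sum_mul (p : R) (k + 1)

theorem sub_one_mul_sigma_one_prime_pow_div_self {R : Type*} [CommRing R] {p : ℕ}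
    (hp : p.Prime) (k : ℕ) :
    ((p : R) - 1) * (σ 1 (p ^ k / p) : R) = (p : R) ^ k - 1 := by
  cases k with
  | zero => simp [Nat.div_eq_of_lt hp.one_lt]
  | succ j => rw [pow_succ, Nat.mul_div_cancel _ hp.pos, sub_one_mul_sigma_one_prime_pow hp]

theorem sub_one_mul_locD {p : ℕ} (hp : p.Prime) (D : ℤ) (f : ℕ) :
    ((p : ℚ) - 1) * locD D f p =
      (p : ℚ) * ppart f p - 1 - ((ppart f p : ℚ) - 1) * kron D p := by
  have hσ := sub_one_mul_sigma_one_prime_pow (R := ℚ) hp (f.factorization p)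
  have hσdiv := sub_one_mul_sigma_one_prime_pow_div_self (R := ℚ) hp (f.factorization p)
  rw [locD, ppart]
  push_cast
  linear_combination hσ - (kron D p : ℚ) * hσdiv

theorem local_relations_D_general (p : ℕ) (hp : p.Prime) (D : ℤ) (f : ℕ) :
    locD D f p =
        (((p : ℚ) + 1) / (p : ℚ)) * locA D f p + (1 / (1 - (p : ℚ))) * locC D p ∧
      locD D f p = (1 / 2) * locB D f p + (1 / 2) * locC D p := by
  have hp1 : (1 : ℚ) < p := by exact_mod_cast hp.one_lt
  have hsub : (p : ℚ) - 1 ≠ 0 := by linarith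
  have hsub' : 1 - (p : ℚ) ≠ 0 := by linarith
  have hp0 : (p : ℚ) ≠ 0 := by linarith
  have hinv : 1 - ((p : ℚ)⁻¹) ^ 2 = ((p : ℚ) - 1) * ((p : ℚ) + 1) / (p : ℚ) ^ 2 := by
    field_simp
    ring
  have hD : locD D f p =
      ((p : ℚ) * ppart f p - 1 - ((ppart f p : ℚ) - 1) * kron D p) / ((p : ℚ) - 1) := by
    rw [eq_div_iff hsub, mul_comm]
    exact sub_one_mul_locD hp D f
  rw [hD, locA, locB, locC, hinv]
  constructor <;> field_simp <;> ring

/-- Lemma: linear relations between the local factors `D_p`, `A_p`, `B_p`, `C_p`. -/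
theorem local_relations_D (p : ℕ) (hp : p.Prime) (n : ℕ) (hn : 0 < n)
    (h4 : n % 4 = 0 ∨ n % 4 = 3) (D : ℤ) (f : ℕ) (hD : IsFundDisc D) (hf : 1 ≤ f)
    (hDf : -(n : ℤ) = D * (f : ℤ) ^ 2) :
    locD D f p =
        (((p : ℚ) + 1) / (p : ℚ)) * locA D f p + (1 / (1 - (p : ℚ))) * locC D p ∧
      locD D f p = (1 / 2) * locB D f p + (1 / 2) * locC D p :=
  local_relations_D_general p hp D f
end
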